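/- Let D be a strongly connected simple directed graph with vertex set {v_1, v_2, …, v_n} such that v_2, v_3, …, v_n is a shortest directed path from v_2 to v_n, v_2 ∈ V_max, v_n ∈ V_min, and dist(V_max, V_min) = n − 2. If γ(D) > (2/3)(n−1)!, then both (v_1,v_2) and (v_2,v_1) are edges of D and v_2 is the only out-neighbor of v_1, i.e. N⁺(v_1)={v_2}. -/

import Mathlib

/-! The shortest-path hypothesis forbids shortcuts: an edge leaving `i ≥ 2` ends at most at
`i + 1`, so `d⁺(i) ≤ i`, and stationarity along the path `2 → 3 → ⋯ → n` gives
`(k - 1)! φ(k) ≤ (n - 1)! φ(n)`. Since `φ(2)` exceeds `(2/3)(n - 1)! φ(n)`, almost no mass may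
leave the path: without the edge `(2, 1)` we would get `φ(2) ≤ φ(3) ≤ (n - 1)! φ(n) / 2`.
Given `(2, 1)`, the out-neighbours of `1` lie in `{2, 3, 4}`, and an edge from `1` to `4`
(resp. `3`) would feed that vertex enough mass to push `φ(2)` back below the bound. -/

namespace PR

/-- Out-degree of `u` in the digraph on vertex set `{1,…,n} ⊆ ℕ` with adjacency `E`. -/
def outDeg (n : ℕ) (E : ℕ → ℕ → Bool) (u : ℕ) : ℕ :=
  ((Finset.Icc 1 n).filter (fun v => E u v)).card

/-- In-degree of `u`. -/
def inDeg (n : ℕ) (E : ℕ → ℕ → Bool) (u : ℕ) : ℕ :=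
  ((Finset.Icc 1 n).filter (fun v => E v u)).card

/-- `E` is a simple digraph on the vertex set `{1,…,n}`: all edges join distinct
vertices of `{1,…,n}` (no loops; the `Bool`-valued adjacency precludes multi-edges). -/
def IsDigraph (n : ℕ) (E : ℕ → ℕ → Bool) : Prop :=
  ∀ u v, E u v = true → u ∈ Finset.Icc 1 n ∧ v ∈ Finset.Icc 1 n ∧ u ≠ v

/-- `WalkLen E k u v` : there is a directed walk of length `k` from `u` to `v`. -/
def WalkLen (E : ℕ → ℕ → Bool) : ℕ → ℕ → ℕ → Prop
  | 0, u, v => u = v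
  | (k+1), u, v => ∃ w, E u w = true ∧ WalkLen E k w v

/-- Every vertex reaches every other vertex by a directed walk. -/
def StronglyConnected (n : ℕ) (E : ℕ → ℕ → Bool) : Prop :=
  ∀ u ∈ Finset.Icc 1 n, ∀ v ∈ Finset.Icc 1 n, ∃ k, WalkLen E k u v

/-- Directed distance: number of edges in a shortest directed path from `u` to `v`. -/
noncomputable def dist (E : ℕ → ℕ → Bool) (u v : ℕ) : ℕ :=
  sInf {k | WalkLen E k u v}

/-- Distance between two sets of vertices. -/
noncomputable def setDist (E : ℕ → ℕ → Bool) (A B : Set ℕ) : ℕ :=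
  sInf {k | ∃ a ∈ A, ∃ b ∈ B, dist E a b = k}

/-- `φ` is the Perron vector of the simple random walk on the digraph: a positive
probability distribution on `{1,…,n}` which is stationary, i.e. `φ P = φ` where
`P(u,v) = 1/d⁺(u)` for edges `(u,v)` and `0` otherwise. -/
def IsPerron (n : ℕ) (E : ℕ → ℕ → Bool) (φ : ℕ → ℝ) : Prop :=
  (∀ v ∈ Finset.Icc 1 n, 0 < φ v) ∧
  (∑ v ∈ Finset.Icc 1 n, φ v = 1) ∧
  (∀ v ∈ Finset.Icc 1 n, φ v =
    ∑ u ∈ Finset.Icc 1 n, if E u v then φ u / (outDeg n E u : ℝ) else 0)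

/-- The principal ratio `γ = (max_u φ(u)) / (min_u φ(u))` of a vector `φ` on `{1,…,n}`. -/
noncomputable def pratio (n : ℕ) (φ : ℕ → ℝ) : ℝ :=
  if h : (Finset.Icc 1 n).Nonempty then
    ((Finset.Icc 1 n).sup' h φ) / ((Finset.Icc 1 n).inf' h φ)
  else 0

/-- Vertices attaining the maximum of `φ`. -/
def Vmax (n : ℕ) (φ : ℕ → ℝ) : Set ℕ :=
  {v | v ∈ Finset.Icc 1 n ∧ ∀ u ∈ Finset.Icc 1 n, φ u ≤ φ v}

/-- Vertices attaining the minimum of `φ`. -/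
def Vmin (n : ℕ) (φ : ℕ → ℝ) : Set ℕ :=
  {v | v ∈ Finset.Icc 1 n ∧ ∀ u ∈ Finset.Icc 1 n, φ v ≤ φ u}

variable {n : ℕ} {E : ℕ → ℕ → Bool} {φ : ℕ → ℝ}

theorem WalkLen.single {u v : ℕ} (h : E u v = true) : WalkLen E 1 u v := ⟨v, h, rfl⟩

theorem WalkLen.append {k l a b c : ℕ} (h₁ : WalkLen E k a b) (h₂ : WalkLen E l b c) :
    WalkLen E (k + l) a c := by
  induction k generalizing a with
  | zero =>
    obtain rfl : a = b := h₁
    rwa [Nat.zero_add]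
  | succ k ih =>
    obtain ⟨w, hw, h₁⟩ := h₁
    rw [Nat.add_right_comm]
    exact ⟨w, hw, ih h₁⟩

theorem exists_adj_of_stronglyConnected (hSC : StronglyConnected n E) {u v : ℕ}
    (hu : u ∈ Finset.Icc 1 n) (hv : v ∈ Finset.Icc 1 n) (huv : u ≠ v) :
    ∃ w, E u w = true := by
  obtain ⟨k, hk⟩ := hSC u hu v hv
  cases k with
  | zero => exact absurd hk huv
  | succ k => obtain ⟨w, hw, -⟩ := hk; exact ⟨w, hw⟩

theorem outDeg_le_card {u : ℕ} {S : Finset ℕ} (h : ∀ v, E u v = true → v ∈ S) :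
    outDeg n E u ≤ S.card :=
  Finset.card_le_card fun v hv => h v (Finset.mem_filter.1 hv).2

theorem outDeg_pos {u v : ℕ} (hv : v ∈ Finset.Icc 1 n) (huv : E u v = true) :
    0 < outDeg n E u :=
  Finset.card_pos.2 ⟨v, Finset.mem_filter.2 ⟨hv, huv⟩⟩

theorem pratio_eq_div {a b : ℕ} (ha : a ∈ Vmax n φ) (hb : b ∈ Vmin n φ) :
    pratio n φ = φ a / φ b := by
  have hne : (Finset.Icc 1 n).Nonempty := ⟨a, ha.1⟩
  rw [pratio, dif_pos hne,
    le_antisymm (Finset.sup'_le _ _ ha.2) (Finset.le_sup' _ ha.1),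
    le_antisymm (Finset.inf'_le _ hb.1) (Finset.le_inf' _ _ hb.2)]

theorem IsPerron.sum_div_le (hφ : IsPerron n E φ) {v : ℕ} (hv : v ∈ Finset.Icc 1 n)
    {S : Finset ℕ} (hSn : S ⊆ Finset.Icc 1 n) (c : ℕ → ℝ) (hS : ∀ u ∈ S, E u v = true)
    (hc : ∀ u ∈ S, (outDeg n E u : ℝ) ≤ c u) :
    ∑ u ∈ S, φ u / c u ≤ φ v := by
  have hterm (u) (hu : u ∈ Finset.Icc 1 n) :
      0 ≤ if E u v then φ u / (outDeg n E u : ℝ) else 0 := by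
    split_ifs
    exacts [div_nonneg (hφ.1 u hu).le (Nat.cast_nonneg _), le_rfl]
  calc ∑ u ∈ S, φ u / c u
      ≤ ∑ u ∈ S, if E u v then φ u / (outDeg n E u : ℝ) else 0 := by
        refine Finset.sum_le_sum fun u hu => ?_
        rw [if_pos (hS u hu)]
        exact div_le_div_of_nonneg_left (hφ.1 u (hSn hu)).le
          (Nat.cast_pos.2 (outDeg_pos hv (hS u hu))) (hc u hu)
    _ ≤ ∑ u ∈ Finset.Icc 1 n, if E u v then φ u / (outDeg n E u : ℝ) else 0 :=
        Finset.sum_le_sum_of_subset_of_nonneg hSn fun u hu _ => hterm u hu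
    _ = φ v := (hφ.2.2 v hv).symm

theorem IsPerron.le_mul_of_adj (hφ : IsPerron n E φ) (hD : IsDigraph n E) {u v : ℕ}
    (huv : E u v = true) {c : ℝ} (hc : outDeg n E u ≤ c) : φ u ≤ c * φ v := by
  obtain ⟨hu, hv, -⟩ := hD u v huv
  have hcpos : 0 < c := lt_of_lt_of_le (Nat.cast_pos.2 (outDeg_pos hv huv)) hc
  have := hφ.sum_div_le hv (Finset.singleton_subset_iff.2 hu) (fun _ => c)
    (by simpa using huv) (by simpa using hc)
  rw [Finset.sum_singleton, div_le_iff₀ hcpos] at this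
  linarith

theorem IsPerron.div_add_div_le (hφ : IsPerron n E φ) (hD : IsDigraph n E) {a b v : ℕ}
    (hab : a ≠ b) (ha : E a v = true) (hb : E b v = true) {ca cb : ℝ}
    (hca : outDeg n E a ≤ ca) (hcb : outDeg n E b ≤ cb) : φ a / ca + φ b / cb ≤ φ v := by
  have := hφ.sum_div_le (hD a v ha).2.1 (S := {a, b})
    (by simp [Finset.insert_subset_iff, (hD a v ha).1, (hD b v hb).1])
    (fun u => if u = a then ca else cb) (by simp [ha, hb]) (by simp [hca, hcb, hab.symm])
  simpa [Finset.sum_pair hab, hab.symm] using this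

theorem walkLen_of_path (hpath : ∀ i, 2 ≤ i → i < n → E i (i + 1) = true) {i j : ℕ}
    (hi : 2 ≤ i) (hij : i ≤ j) (hjn : j ≤ n) : WalkLen E (j - i) i j := by
  induction j, hij using Nat.le_induction with
  | base => simp only [Nat.sub_self]; rfl
  | succ j hij ih =>
    rw [Nat.sub_add_comm hij]
    exact (ih (by omega)).append (.single (hpath j (by omega) (by omega)))

theorem le_add_two_of_walkLen (hpath : ∀ i, 2 ≤ i → i < n → E i (i + 1) = true)
    (hshort : dist E 2 n = n - 2) {k j : ℕ} (hk : WalkLen E k 2 j) (hjn : j ≤ n) :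
    j ≤ k + 2 := by
  rcases lt_or_ge j 2 with hj | hj
  · omega
  have : dist E 2 n ≤ k + (n - j) := Nat.sInf_le (hk.append (walkLen_of_path hpath hj hjn le_rfl))
  omega

theorem le_succ_of_adj (hD : IsDigraph n E)
    (hpath : ∀ i, 2 ≤ i → i < n → E i (i + 1) = true)
    (hshort : dist E 2 n = n - 2) {i j : ℕ} (hi : 2 ≤ i) (hin : i ≤ n) (hij : E i j = true) :
    j ≤ i + 1 := by
  have := le_add_two_of_walkLen hpath hshort
    ((walkLen_of_path hpath le_rfl hi hin).append (.single hij))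
    (Finset.mem_Icc.1 (hD i j hij).2.1).2
  omega

theorem outDeg_le_self (hD : IsDigraph n E)
    (hpath : ∀ i, 2 ≤ i → i < n → E i (i + 1) = true)
    (hshort : dist E 2 n = n - 2) {i : ℕ} (hi : 2 ≤ i) (hin : i ≤ n) :
    outDeg n E i ≤ i := by
  calc outDeg n E i ≤ ((Finset.Icc 1 (i + 1)).erase i).card := outDeg_le_card fun v hv => by
        have := le_succ_of_adj hD hpath hshort hi hin hv
        obtain ⟨-, hv, hne⟩ := hD i v hv
        simp only [Finset.mem_Icc, Finset.mem_erase] at hv ⊢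
        omega
    _ = i := by rw [Finset.card_erase_of_mem (by simp; omega)]; simp

theorem factorial_mul_le (hφ : IsPerron n E φ) (hD : IsDigraph n E)
    (hpath : ∀ i, 2 ≤ i → i < n → E i (i + 1) = true) (hshort : dist E 2 n = n - 2)
    {k : ℕ} (hk : 2 ≤ k) (hkn : k ≤ n) :
    ((k - 1).factorial : ℝ) * φ k ≤ (n - 1).factorial * φ n := by
  induction hkn using Nat.decreasingInduction with
  | self => rfl
  | of_succ k hkn ih =>
    have hstep : φ k ≤ k * φ (k + 1) := hφ.le_mul_of_adj hD (hpath k hk hkn)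
      (by exact_mod_cast outDeg_le_self hD hpath hshort hk hkn.le)
    calc ((k - 1).factorial : ℝ) * φ k ≤ (k - 1).factorial * (k * φ (k + 1)) := by gcongr
      _ = (k + 1 - 1).factorial * φ (k + 1) := by
        rw [← mul_assoc, Nat.add_sub_cancel, ← Nat.mul_factorial_pred (by omega : k ≠ 0)]
        push_cast; ring
      _ ≤ _ := ih (by omega)

theorem adj_two_one (hn : 3 ≤ n) (hφ : IsPerron n E φ) (hD : IsDigraph n E)
    (hpath : ∀ i, 2 ≤ i → i < n → E i (i + 1) = true) (hshort : dist E 2 n = n - 2)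
    (hlarge : 2 / 3 * ((n - 1).factorial : ℝ) * φ n < φ 2) : E 2 1 = true := by
  by_contra h21
  have hd2 : outDeg n E 2 ≤ ({3} : Finset ℕ).card := outDeg_le_card fun v hv => by
    have := le_succ_of_adj hD hpath hshort le_rfl (by omega) hv
    have hv1 : v ≠ 1 := by rintro rfl; exact h21 hv
    obtain ⟨-, hv, hne⟩ := hD 2 v hv
    simp only [Finset.mem_Icc, Finset.mem_singleton] at hv ⊢
    omega
  have h23 : φ 2 ≤ 1 * φ 3 :=
    hφ.le_mul_of_adj hD (hpath 2 le_rfl (by omega)) (by exact_mod_cast hd2)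
  have h3 := factorial_mul_le hφ hD hpath hshort (k := 3) (by omega) hn
  have h2pos := hφ.1 2 (by simp; omega)
  norm_num [Nat.factorial] at h3
  linarith

theorem le_four_of_adj_one (hD : IsDigraph n E)
    (hpath : ∀ i, 2 ≤ i → i < n → E i (i + 1) = true)
    (hshort : dist E 2 n = n - 2) (h21 : E 2 1 = true) {j : ℕ} (h1j : E 1 j = true) : j ≤ 4 :=
  le_add_two_of_walkLen hpath hshort ((WalkLen.single h21).append (.single h1j))
    (Finset.mem_Icc.1 (hD 1 j h1j).2.1).2

theorem adj_one_four_eq_false (hφ : IsPerron n E φ) (hD : IsDigraph n E)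
    (hpath : ∀ i, 2 ≤ i → i < n → E i (i + 1) = true) (hshort : dist E 2 n = n - 2)
    (hlarge : 2 / 3 * ((n - 1).factorial : ℝ) * φ n < φ 2) (h21 : E 2 1 = true) :
    E 1 4 = false := by
  refine Bool.eq_false_iff.2 fun h14 => ?_
  have h4n : 4 ≤ n := (Finset.mem_Icc.1 (hD 1 4 h14).2.1).2
  have hd1 : outDeg n E 1 ≤ ({2, 3, 4} : Finset ℕ).card := outDeg_le_card fun v hv => by
    have := le_four_of_adj_one hD hpath hshort h21 hv
    obtain ⟨-, hv, hne⟩ := hD 1 v hv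
    simp only [Finset.mem_Icc, Finset.mem_insert, Finset.mem_singleton] at hv ⊢
    omega
  have hd2 := outDeg_le_self hD hpath hshort le_rfl (by omega)
  have hd3 := outDeg_le_self hD hpath hshort (i := 3) (by omega) (by omega)
  have h1 : φ 2 ≤ 2 * φ 1 := hφ.le_mul_of_adj hD h21 (by exact_mod_cast hd2)
  have h3 : φ 2 ≤ 2 * φ 3 :=
    hφ.le_mul_of_adj hD (hpath 2 le_rfl (by omega)) (by exact_mod_cast hd2)
  have h4 : φ 1 / 3 + φ 3 / 3 ≤ φ 4 := hφ.div_add_div_le hD (by omega) h14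
    (hpath 3 (by omega) (by omega)) (by exact_mod_cast hd1) (by exact_mod_cast hd3)
  have h4' := factorial_mul_le hφ hD hpath hshort (k := 4) (by omega) h4n
  have h2pos := hφ.1 2 (by simp; omega)
  norm_num [Nat.factorial] at h4'
  -- `6 φ(4) ≥ 2 φ(1) + 2 φ(3) ≥ 2 φ(2)`, while `6 φ(4) ≤ (n - 1)! φ(n) < 3/2 φ(2)`
  linarith

theorem adj_one_three_eq_false (hn : 3 ≤ n) (hφ : IsPerron n E φ) (hD : IsDigraph n E)
    (hpath : ∀ i, 2 ≤ i → i < n → E i (i + 1) = true) (hshort : dist E 2 n = n - 2)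
    (hlarge : 2 / 3 * ((n - 1).factorial : ℝ) * φ n < φ 2) (h21 : E 2 1 = true)
    (h14 : E 1 4 = false) : E 1 3 = false := by
  refine Bool.eq_false_iff.2 fun h13 => ?_
  have hd1 : outDeg n E 1 ≤ ({2, 3} : Finset ℕ).card := outDeg_le_card fun v hv => by
    have := le_four_of_adj_one hD hpath hshort h21 hv
    have hv4 : v ≠ 4 := by rintro rfl; simp [h14] at hv
    obtain ⟨-, hv, hne⟩ := hD 1 v hv
    simp only [Finset.mem_Icc, Finset.mem_insert, Finset.mem_singleton] at hv ⊢
    omega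
  have hd2 := outDeg_le_self hD hpath hshort le_rfl (by omega)
  have h1 : φ 2 ≤ 2 * φ 1 := hφ.le_mul_of_adj hD h21 (by exact_mod_cast hd2)
  have h3 : φ 2 / 2 + φ 1 / 2 ≤ φ 3 := hφ.div_add_div_le hD (by omega)
    (hpath 2 le_rfl (by omega)) h13 (by exact_mod_cast hd2) (by exact_mod_cast hd1)
  have h3' := factorial_mul_le hφ hD hpath hshort (k := 3) (by omega) hn
  have h2pos := hφ.1 2 (by simp; omega)
  norm_num [Nat.factorial] at h3'
  -- `2 φ(3) ≥ φ(2) + φ(1) ≥ 3/2 φ(2)`, while `2 φ(3) ≤ (n - 1)! φ(n) < 3/2 φ(2)`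
  linarith

theorem stmt5_general (n : ℕ) (hn : 3 ≤ n) (E : ℕ → ℕ → Bool) (φ : ℕ → ℝ)
    (hD : IsDigraph n E) (hSC : StronglyConnected n E) (hφ : IsPerron n E φ)
    (hpath : ∀ i, 2 ≤ i → i < n → E i (i+1) = true)
    (hshort : dist E 2 n = n - 2)
    (hmax : (2:ℕ) ∈ Vmax n φ) (hmin : n ∈ Vmin n φ)
    (hγ : (2/3 : ℝ) * (Nat.factorial (n - 1) : ℝ) < pratio n φ) :
    E 1 2 = true ∧ E 2 1 = true ∧ (∀ v, E 1 v = true ↔ v = 2) := by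
  have hlarge : 2 / 3 * ((n - 1).factorial : ℝ) * φ n < φ 2 := by
    rwa [pratio_eq_div hmax hmin, lt_div_iff₀ (hφ.1 n hmin.1)] at hγ
  have h21 := adj_two_one hn hφ hD hpath hshort hlarge
  have h14 := adj_one_four_eq_false hφ hD hpath hshort hlarge h21
  have h13 := adj_one_three_eq_false hn hφ hD hpath hshort hlarge h21 h14
  have hN1 : ∀ v, E 1 v = true → v = 2 := fun v hv => by
    have := le_four_of_adj_one hD hpath hshort h21 hv
    have hv3 : v ≠ 3 := by rintro rfl; simp [h13] at hv
    have hv4 : v ≠ 4 := by rintro rfl; simp [h14] at hv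
    obtain ⟨-, hv, hne⟩ := hD 1 v hv
    rw [Finset.mem_Icc] at hv
    omega
  obtain ⟨w, hw⟩ := exists_adj_of_stronglyConnected hSC (u := 1) (v := 2)
    (by simp; omega) (by simp; omega) (by omega)
  have h12 : E 1 2 = true := hN1 w hw ▸ hw
  exact ⟨h12, h21, fun v => ⟨hN1 v, fun hv => hv ▸ h12⟩⟩

/-- If `v_2,…,v_n` is a shortest path from `v_2` to `v_n`, `v_2 ∈ V_max`,
`v_n ∈ V_min`, `dist(V_max,V_min) = n-2`, and `γ(D) > (2/3)(n-1)!`, then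
`(v_1,v_2), (v_2,v_1) ∈ E(D)` and `N⁺(v_1) = {v_2}`. -/
theorem stmt5 (n : ℕ) (hn : 3 ≤ n) (E : ℕ → ℕ → Bool) (φ : ℕ → ℝ)
    (hD : IsDigraph n E) (hSC : StronglyConnected n E) (hφ : IsPerron n E φ)
    (hpath : ∀ i, 2 ≤ i → i < n → E i (i+1) = true)
    (hshort : dist E 2 n = n - 2)
    (hmax : (2:ℕ) ∈ Vmax n φ) (hmin : n ∈ Vmin n φ)
    (hsd : setDist E (Vmax n φ) (Vmin n φ) = n - 2)
    (hγ : (2/3 : ℝ) * (Nat.factorial (n - 1) : ℝ) < pratio n φ) :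
    E 1 2 = true ∧ E 2 1 = true ∧ (∀ v, E 1 v = true ↔ v = 2) :=
  stmt5_general n hn E φ hD hSC hφ hpath hshort hmax hmin hγ

end PR
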